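/- arXiv:2604.01138 — 2 statements merged into one kernel-verified Lean document; each statement's English description precedes it below -/
import Mathlib

section
/- For every a ∈ (1, √(8/3)), if π²(i²/a² + j²) = π²(1/a² + 4) for positive integers i, j, then (i,j) = (1,2); that is, the third Dirichlet eigenvalue of the Laplacian on R_a is simple. -/
open Real

set_option maxHeartbeats 1000000

/-- For `1 < a < √(8/3)`, the third Dirichlet eigenvalue `π²(1/a²+4)` of the Laplacian
on `R_a = (0,a) × (0,1)` is simple: the only pair of positive integers `(i,j)` with
`π²(i²/a² + j²) = π²(1/a² + 4)` is `(1,2)`. -/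
theorem third_eigenvalue_simple (a : ℝ) (ha1 : 1 < a) (ha2 : a < Real.sqrt (8/3)) :
    ∀ i j : ℕ, 1 ≤ i → 1 ≤ j →
      π^2 * ((i:ℝ)^2/a^2 + (j:ℝ)^2) = π^2 * (1/a^2 + 4) → (i, j) = (1, 2) := by
  intro i j hi hj heq
  have ha0 : (0:ℝ) < a := lt_trans one_pos ha1
  have hπ : (0:ℝ) < π ^ 2 := by positivity
  have ha2' : a ^ 2 < 8 / 3 := by
    have h := Real.sq_sqrt (by norm_num : (8:ℝ)/3 ≥ 0)
    nlinarith [Real.sqrt_nonneg ((8:ℝ)/3)]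
  have ha1' : 1 < a ^ 2 := by nlinarith
  have h0 : (i:ℝ)^2/a^2 + (j:ℝ)^2 = 1/a^2 + 4 :=
    mul_left_cancel₀ (ne_of_gt hπ) heq
  have h : (i:ℝ)^2 + (j:ℝ)^2 * a^2 = 1 + 4 * a^2 := by
    field_simp at h0
    nlinarith [h0]
  clear heq h0 ha2 hπ
  have hi1 : (1:ℝ) ≤ (i:ℝ) := by exact_mod_cast hi
  have hj1 : (1:ℝ) ≤ (j:ℝ) := by exact_mod_cast hj
  have hi2 : (1:ℝ) ≤ (i:ℝ)^2 := by nlinarith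
  have ha2sq : (0:ℝ) ≤ a^2 := sq_nonneg a
  -- j ≤ 2
  have hjle : j ≤ 2 := by
    by_contra hcon
    push_neg at hcon
    have h3 : (3:ℝ) ≤ (j:ℝ) := by exact_mod_cast hcon
    have h9 : (9:ℝ) ≤ (j:ℝ)^2 := by nlinarith
    nlinarith [mul_le_mul_of_nonneg_right h9 ha2sq]
  interval_cases j
  · -- j = 1 : i² = 1 + 3a², so 4 < i² < 9
    exfalso
    push_cast at h
    have h4 : (4:ℝ) < (i:ℝ)^2 := by nlinarith
    have h9 : (i:ℝ)^2 < 9 := by nlinarith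
    have hlt : i < 3 := by
      by_contra hcon
      push_neg at hcon
      have : (3:ℝ) ≤ (i:ℝ) := by exact_mod_cast hcon
      nlinarith
    have hgt : 2 < i := by
      by_contra hcon
      push_neg at hcon
      have : (i:ℝ) ≤ 2 := by exact_mod_cast hcon
      nlinarith
    omega
  · -- j = 2 : i² = 1
    push_cast at h
    have h1 : (i:ℝ)^2 = 1 := by nlinarith
    have : i = 1 := by
      have : (i:ℝ) = 1 := by nlinarith [sq_nonneg ((i:ℝ)-1)]
      exact_mod_cast this
    subst this
    rfl
end

section
/- The function u₂(x,y) = 2(sin(2πx) sin(πy) + sin(πx) sin(2πy)) vanishes on the anti-diagonal {(x,y) ∈ (0,1)² : x + y = 1}, is strictly positive on {(x,y) ∈ (0,1)² : x + y < 1}, and is strictly negative on {(x,y) ∈ (0,1)² : x + y > 1}. -/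
open Real

/-- `u₂(x,y) = 2(sin(2πx) sin(πy) + sin(πx) sin(2πy))`. -/
noncomputable def u₂ (x y : ℝ) : ℝ :=
  2 * (Real.sin (2*π*x) * Real.sin (π*y) + Real.sin (π*x) * Real.sin (2*π*y))

lemma u₂_factor (x y : ℝ) :
    u₂ x y = 8 * Real.sin (π*x) * Real.sin (π*y) *
      (Real.cos (π*(x+y)/2) * Real.cos (π*(x-y)/2)) := by
  have h1 : (2*π*x) = 2*(π*x) := by ring
  have h2 : (2*π*y) = 2*(π*y) := by ring
  have hc := Real.cos_add_cos (π*x) (π*y)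
  have e1 : (π*x + π*y)/2 = π*(x+y)/2 := by ring
  have e2 : (π*x - π*y)/2 = π*(x-y)/2 := by ring
  rw [e1, e2] at hc
  unfold u₂
  rw [h1, h2, Real.sin_two_mul, Real.sin_two_mul]
  linear_combination 4 * Real.sin (π*x) * Real.sin (π*y) * hc

/-- Nodal structure of `u₂` in the open unit square: it vanishes on the anti-diagonal
`x + y = 1`, is positive below it, and negative above it. -/
theorem u₂_nodal_structure :
    ∀ x y : ℝ, x ∈ Set.Ioo (0:ℝ) 1 → y ∈ Set.Ioo (0:ℝ) 1 →
      (x + y = 1 → u₂ x y = 0) ∧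
      (x + y < 1 → 0 < u₂ x y) ∧
      (1 < x + y → u₂ x y < 0) := by
  intro x y hx hy
  obtain ⟨hx0, hx1⟩ := hx
  obtain ⟨hy0, hy1⟩ := hy
  have hπ := Real.pi_pos
  have hsx : 0 < Real.sin (π*x) :=
    Real.sin_pos_of_pos_of_lt_pi (by positivity) (by nlinarith)
  have hsy : 0 < Real.sin (π*y) :=
    Real.sin_pos_of_pos_of_lt_pi (by positivity) (by nlinarith)
  have hcd : 0 < Real.cos (π*(x-y)/2) := by
    apply Real.cos_pos_of_mem_Ioo
    constructor <;> [nlinarith; nlinarith]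
  rw [u₂_factor]
  refine ⟨?_, ?_, ?_⟩
  · intro h
    have : π*(x+y)/2 = π/2 := by rw [h]; ring
    rw [this, Real.cos_pi_div_two]
    ring
  · intro h
    have hcs : 0 < Real.cos (π*(x+y)/2) := by
      apply Real.cos_pos_of_mem_Ioo
      constructor <;> nlinarith
    positivity
  · intro h
    have hcs : Real.cos (π*(x+y)/2) < 0 := by
      apply Real.cos_neg_of_pi_div_two_lt_of_lt <;> nlinarith
    nlinarith [mul_neg_of_neg_of_pos hcs (mul_pos (mul_pos hsx hsy) hcd)]
end
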